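/- For any poset P, the lattice Co(P) satisfies the Udav identity (U): x ∧ (x₀ ∨ x₁) ∧ (x₁ ∨ x₂) ∧ (x₀ ∨ x₂) = (x ∧ x₀ ∧ (x₁ ∨ x₂)) ∨ (x ∧ x₁ ∧ (x₀ ∨ x₂)) ∨ (x ∧ x₂ ∧ (x₀ ∨ x₁)). -/
import Mathlib


/-- The join in the lattice `Co(P)` of order-convex subsets of `P`. -/
def cJoin {P : Type*} [PartialOrder P] (X Y : Set P) : Set P :=
  X ∪ Y ∪ {z | ∃ x ∈ X, ∃ y ∈ Y, (x < z ∧ z < y) ∨ (y < z ∧ z < x)}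

section aux
variable {P : Type*} [PartialOrder P] {X Y : Set P}

lemma subset_cJoin_left : X ⊆ cJoin X Y := fun _ hx => Or.inl (Or.inl hx)

lemma subset_cJoin_right : Y ⊆ cJoin X Y := fun _ hy => Or.inl (Or.inr hy)

lemma cJoin_comm (X Y : Set P) : cJoin X Y = cJoin Y X := by
  ext z
  constructor <;>
  · rintro ((h|h)|⟨x,hx,y,hy,h|h⟩)
    · exact Or.inl (Or.inr h)
    · exact Or.inl (Or.inl h)
    · exact Or.inr ⟨y,hy,x,hx,Or.inr h⟩
    · exact Or.inr ⟨y,hy,x,hx,Or.inl h⟩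

lemma cJoin_subset {S : Set P} (hS : S.OrdConnected) (hXS : X ⊆ S) (hYS : Y ⊆ S) :
    cJoin X Y ⊆ S := by
  rintro z ((h|h)|⟨x,hx,y,hy,⟨h1,h2⟩|⟨h1,h2⟩⟩)
  · exact hXS h
  · exact hYS h
  · exact hS.out (hXS hx) (hYS hy) ⟨h1.le, h2.le⟩
  · exact hS.out (hYS hy) (hXS hx) ⟨h1.le, h2.le⟩

lemma cJoin_aux1 (hX : X.OrdConnected) {a b c : P} (haX : a ∈ X)
    (hb : b ∈ cJoin X Y) (hac : a ≤ c) (hcb : c ≤ b) : c ∈ cJoin X Y := by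
  rcases hb with ((hbX|hbY)|⟨x,hx,y,hy,⟨h1,h2⟩|⟨h1,h2⟩⟩)
  · exact subset_cJoin_left (hX.out haX hbX ⟨hac, hcb⟩)
  · rcases hac.lt_or_eq with h | rfl
    · rcases hcb.lt_or_eq with h' | rfl
      · exact Or.inr ⟨a, haX, b, hbY, Or.inl ⟨h, h'⟩⟩
      · exact subset_cJoin_right hbY
    · exact subset_cJoin_left haX
  · rcases hac.lt_or_eq with h | rfl
    · exact Or.inr ⟨a, haX, y, hy, Or.inl ⟨h, lt_of_le_of_lt hcb h2⟩⟩
    · exact subset_cJoin_left haX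
  · exact subset_cJoin_left (hX.out haX hx ⟨hac, hcb.trans h2.le⟩)

lemma cJoin_aux2 (hX : X.OrdConnected) {x y a b c : P} (hx : x ∈ X) (hy : y ∈ Y)
    (hxa : x < a) (hay : a < y) (hb : b ∈ cJoin X Y) (hac : a ≤ c) (hcb : c ≤ b) :
    c ∈ cJoin X Y := by
  have hxc : x < c := lt_of_lt_of_le hxa hac
  rcases hb with ((hbX|hbY)|⟨x₂,hx₂,y₂,hy₂,⟨h1,h2⟩|⟨h1,h2⟩⟩)
  · exact subset_cJoin_left (hX.out hx hbX ⟨hxc.le, hcb⟩)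
  · rcases hcb.lt_or_eq with h' | rfl
    · exact Or.inr ⟨x, hx, b, hbY, Or.inl ⟨hxc, h'⟩⟩
    · exact subset_cJoin_right hbY
  · exact Or.inr ⟨x, hx, y₂, hy₂, Or.inl ⟨hxc, lt_of_le_of_lt hcb h2⟩⟩
  · exact subset_cJoin_left (hX.out hx hx₂ ⟨hxc.le, hcb.trans h2.le⟩)

lemma cJoin_ordConnected (hX : X.OrdConnected) (hY : Y.OrdConnected) :
    (cJoin X Y).OrdConnected := by
  constructor
  rintro a ha b hb c ⟨hac, hcb⟩
  rcases ha with ((haX|haY)|⟨x,hx,y,hy,⟨h1,h2⟩|⟨h1,h2⟩⟩)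
  · exact cJoin_aux1 hX haX hb hac hcb
  · rw [cJoin_comm] at hb ⊢
    exact cJoin_aux1 hY haY hb hac hcb
  · exact cJoin_aux2 hX hx hy h1 h2 hb hac hcb
  · rw [cJoin_comm] at hb ⊢
    exact cJoin_aux2 hY hy hx h1 h2 hb hac hcb

end aux

/-- `Co(P)` satisfies the Udav identity (U). -/
theorem co_udav {P : Type*} [PartialOrder P]
    (X X₀ X₁ X₂ : Set P) (hX : X.OrdConnected) (h0 : X₀.OrdConnected)
    (h1 : X₁.OrdConnected) (h2 : X₂.OrdConnected) :
    X ∩ cJoin X₀ X₁ ∩ cJoin X₁ X₂ ∩ cJoin X₀ X₂ =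
      cJoin (cJoin (X ∩ X₀ ∩ cJoin X₁ X₂) (X ∩ X₁ ∩ cJoin X₀ X₂)) (X ∩ X₂ ∩ cJoin X₀ X₁) := by
  set L := X ∩ cJoin X₀ X₁ ∩ cJoin X₁ X₂ ∩ cJoin X₀ X₂ with hLdef
  have hL : L.OrdConnected :=
    (((hX.inter (cJoin_ordConnected h0 h1)).inter (cJoin_ordConnected h1 h2)).inter
      (cJoin_ordConnected h0 h2))
  apply Set.Subset.antisymm
  · -- L ⊆ RHS
    rintro z ⟨⟨⟨hzX, h01⟩, h12⟩, h02⟩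
    -- First show z belongs to one of X₀, X₁, X₂.
    have c0 : (∃ a ∈ X₀, a < z) → (∃ b ∈ X₀, z < b) → z ∈ X₀ := by
      rintro ⟨a, ha, hal⟩ ⟨b, hb, hbl⟩; exact h0.out ha hb ⟨hal.le, hbl.le⟩
    have c1 : (∃ a ∈ X₁, a < z) → (∃ b ∈ X₁, z < b) → z ∈ X₁ := by
      rintro ⟨a, ha, hal⟩ ⟨b, hb, hbl⟩; exact h1.out ha hb ⟨hal.le, hbl.le⟩
    have c2 : (∃ a ∈ X₂, a < z) → (∃ b ∈ X₂, z < b) → z ∈ X₂ := by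
      rintro ⟨a, ha, hal⟩ ⟨b, hb, hbl⟩; exact h2.out ha hb ⟨hal.le, hbl.le⟩
    have H01 : z ∈ X₀ ∨ z ∈ X₁ ∨
        (((∃ a ∈ X₀, a < z) ∧ (∃ b ∈ X₁, z < b)) ∨
         ((∃ a ∈ X₁, a < z) ∧ (∃ b ∈ X₀, z < b))) := by
      rcases h01 with ((h|h)|⟨x,hx,y,hy,⟨u,v⟩|⟨u,v⟩⟩)
      · exact Or.inl h
      · exact Or.inr (Or.inl h)
      · exact Or.inr (Or.inr (Or.inl ⟨⟨x,hx,u⟩,⟨y,hy,v⟩⟩))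
      · exact Or.inr (Or.inr (Or.inr ⟨⟨y,hy,u⟩,⟨x,hx,v⟩⟩))
    have H12 : z ∈ X₁ ∨ z ∈ X₂ ∨
        (((∃ a ∈ X₁, a < z) ∧ (∃ b ∈ X₂, z < b)) ∨
         ((∃ a ∈ X₂, a < z) ∧ (∃ b ∈ X₁, z < b))) := by
      rcases h12 with ((h|h)|⟨x,hx,y,hy,⟨u,v⟩|⟨u,v⟩⟩)
      · exact Or.inl h
      · exact Or.inr (Or.inl h)
      · exact Or.inr (Or.inr (Or.inl ⟨⟨x,hx,u⟩,⟨y,hy,v⟩⟩))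
      · exact Or.inr (Or.inr (Or.inr ⟨⟨y,hy,u⟩,⟨x,hx,v⟩⟩))
    have H02 : z ∈ X₀ ∨ z ∈ X₂ ∨
        (((∃ a ∈ X₀, a < z) ∧ (∃ b ∈ X₂, z < b)) ∨
         ((∃ a ∈ X₂, a < z) ∧ (∃ b ∈ X₀, z < b))) := by
      rcases h02 with ((h|h)|⟨x,hx,y,hy,⟨u,v⟩|⟨u,v⟩⟩)
      · exact Or.inl h
      · exact Or.inr (Or.inl h)
      · exact Or.inr (Or.inr (Or.inl ⟨⟨x,hx,u⟩,⟨y,hy,v⟩⟩))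
      · exact Or.inr (Or.inr (Or.inr ⟨⟨y,hy,u⟩,⟨x,hx,v⟩⟩))
    have key : z ∈ X₀ ∨ z ∈ X₁ ∨ z ∈ X₂ := by
      rcases H01 with h | h | H01'
      · exact Or.inl h
      · exact Or.inr (Or.inl h)
      rcases H12 with h | h | H12'
      · exact Or.inr (Or.inl h)
      · exact Or.inr (Or.inr h)
      rcases H02 with h | h | H02'
      · exact Or.inl h
      · exact Or.inr (Or.inr h)
      rcases H01' with ⟨d0, u1⟩ | ⟨d1, u0⟩ <;>
        rcases H12' with ⟨d1', u2⟩ | ⟨d2, u1'⟩ <;>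
          rcases H02' with ⟨d0', u2'⟩ | ⟨d2', u0'⟩
      · exact Or.inr (Or.inl (c1 d1' u1))
      · exact Or.inl (c0 d0 u0')
      · exact Or.inr (Or.inr (c2 d2 u2'))
      · exact Or.inl (c0 d0 u0')
      · exact Or.inl (c0 d0' u0)
      · exact Or.inr (Or.inr (c2 d2' u2))
      · exact Or.inl (c0 d0' u0)
      · exact Or.inr (Or.inl (c1 d1 u1'))
    rcases key with h | h | h
    · exact subset_cJoin_left (subset_cJoin_left ⟨⟨hzX, h⟩, h12⟩)
    · exact subset_cJoin_left (subset_cJoin_right ⟨⟨hzX, h⟩, h02⟩)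
    · exact subset_cJoin_right ⟨⟨hzX, h⟩, h01⟩
  · -- RHS ⊆ L
    have hA : X ∩ X₀ ∩ cJoin X₁ X₂ ⊆ L := by
      rintro z ⟨⟨hx, h0z⟩, h12⟩
      exact ⟨⟨⟨hx, subset_cJoin_left h0z⟩, h12⟩, subset_cJoin_left h0z⟩
    have hB : X ∩ X₁ ∩ cJoin X₀ X₂ ⊆ L := by
      rintro z ⟨⟨hx, h1z⟩, h02⟩
      exact ⟨⟨⟨hx, subset_cJoin_right h1z⟩, subset_cJoin_left h1z⟩, h02⟩
    have hC : X ∩ X₂ ∩ cJoin X₀ X₁ ⊆ L := by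
      rintro z ⟨⟨hx, h2z⟩, h01⟩
      exact ⟨⟨⟨hx, h01⟩, subset_cJoin_right h2z⟩, subset_cJoin_right h2z⟩
    exact cJoin_subset hL (cJoin_subset hL hA hB) hC
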